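/- For η ≥ 0, μ > 0, x > 0 and y ≥ 0, the moments are monotone in μ plus a correction: Q_{η,μ+1}(x,y) ≥ Q_{η,μ}(x,y), i.e. the inhomogeneous recurrence implies Q_{η,μ+1}(x,y) − Q_{η,μ}(x,y) = η Q_{η−1,μ+1}(x,y) + (y/x)^{μ/2} y^η e^{-x-y} I_μ(2√(xy)) ≥ 0. -/

import Mathlib

open Real MeasureTheory

/-- Modified Bessel function of the first kind `I_ν(z)` via its Maclaurin series. -/
noncomputable def besselI (ν z : ℝ) : ℝ :=
  (z / 2) ^ ν * ∑' n : ℕ, (z ^ 2 / 4) ^ n / (n.factorial * Real.Gamma (ν + n + 1))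

/-- Upper incomplete gamma function `Γ(a, y)`. -/
noncomputable def uGamma (a y : ℝ) : ℝ := ∫ t in Set.Ioi y, t ^ (a - 1) * Real.exp (-t)

/-- Regularized upper incomplete gamma function `Q_a(y) = Γ(a,y)/Γ(a)`. -/
noncomputable def regQ (a y : ℝ) : ℝ := uGamma a y / Real.Gamma a

/-- η-th moment of the partial non-central chi-squared distribution (Nuttall Q-function). -/
noncomputable def nuttallQ (η μ x y : ℝ) : ℝ :=
  x ^ ((1 - μ) / 2) *
    ∫ t in Set.Ioi y, t ^ (η + (μ - 1) / 2) * Real.exp (-t - x) *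
      besselI (μ - 1) (2 * Real.sqrt (x * t))

/-- Generalized Marcum Q-function. -/
noncomputable def marcumQ (μ x y : ℝ) : ℝ := nuttallQ 0 μ x y

/-- Complementary Marcum function `P_μ(x,y)`. -/
noncomputable def marcumP (μ x y : ℝ) : ℝ :=
  x ^ ((1 - μ) / 2) *
    ∫ t in Set.Ioc 0 y, t ^ ((μ - 1) / 2) * Real.exp (-t - x) *
      besselI (μ - 1) (2 * Real.sqrt (x * t))

/-!
Expanding `I_{μ-1}` in its power series and integrating term by term gives
`Q_{η,μ}(x,y) = ∑ₙ e^{-x} xⁿ / (n! Γ(μ+n)) · Γ(η+μ+n, y)`.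
With `a = η+μ+n = (μ+n) + η`, the recurrence `Γ(a+1, y) = a Γ(a, y) + y^a e^{-y}` and
`Γ(μ+1+n) = (μ+n) Γ(μ+n)` split the `n`-th term of `Q_{η,μ+1}` into the `n`-th terms of
`Q_{η,μ}`, of `η Q_{η-1,μ+1}` and of a series that resums to
`(y/x)^{μ/2} y^η e^{-x-y} I_μ(2√(xy))`. All terms involved are nonnegative.
-/

open Set Filter Topology

lemma Gamma_add_nat_pos {c : ℝ} (hc : 0 < c) (n : ℕ) : 0 < Gamma (c + n) :=
  Gamma_pos_of_pos (by positivity)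

lemma summable_pow_mul_Gamma_div_factorial_mul_Gamma {x b c : ℝ} (hx : 0 ≤ x) (hb : 0 < b)
    (hc : 0 < c) :
    Summable fun n : ℕ => x ^ n * Gamma (b + n) / (n.factorial * Gamma (c + n)) := by
  set f : ℕ → ℝ := fun n => x ^ n * Gamma (b + n) / (n.factorial * Gamma (c + n))
  have hf_nonneg (n : ℕ) : 0 ≤ f n := by
    have := Gamma_add_nat_pos hb n; have := Gamma_add_nat_pos hc n; positivity
  have hf_succ (n : ℕ) : f (n + 1) = x * (b + n) / ((n + 1) * (c + n)) * f n := by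
    have hΓ := (Gamma_add_nat_pos hc n).ne'
    simp only [f, Nat.cast_succ, ← add_assoc, Gamma_add_one (by positivity : b + n ≠ 0),
      Gamma_add_one (by positivity : c + n ≠ 0), Nat.factorial_succ, Nat.cast_mul, pow_succ]
    field_simp
  refine summable_of_ratio_norm_eventually_le (r := 1 / 2) (by norm_num) ?_
  filter_upwards [eventually_ge_atTop ⌈b⌉₊, eventually_ge_atTop ⌈4 * x⌉₊] with n hbn hxn
  have hbn : b ≤ n := Nat.ceil_le.mp hbn
  have hxn : 4 * x ≤ n := Nat.ceil_le.mp hxn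
  have hratio : x * (b + n) / ((n + 1) * (c + n)) ≤ 1 / 2 := by
    rw [div_le_iff₀ (by positivity)]
    nlinarith [mul_le_mul hxn hbn hb.le (Nat.cast_nonneg (α := ℝ) n)]
  rw [hf_succ, norm_of_nonneg (hf_nonneg n), norm_of_nonneg (by have := hf_nonneg n; positivity)]
  exact mul_le_mul_of_nonneg_right hratio (hf_nonneg n)

lemma summable_pow_div_factorial_mul_Gamma {u c : ℝ} (hu : 0 ≤ u) (hc : 0 < c) :
    Summable fun n : ℕ => u ^ n / (n.factorial * Gamma (c + n)) := by
  refine (summable_pow_mul_Gamma_div_factorial_mul_Gamma hu one_pos hc).of_nonneg_of_le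
    (fun n => by have := Gamma_add_nat_pos hc n; positivity) fun n => ?_
  rw [add_comm (1 : ℝ), Gamma_nat_eq_factorial]
  have := Gamma_add_nat_pos hc n
  gcongr
  exact le_mul_of_one_le_right (by positivity) (by exact_mod_cast n.factorial_pos)

lemma besselI_nonneg {ν z : ℝ} (hν : -1 < ν) (hz : 0 ≤ z) : 0 ≤ besselI ν z := by
  refine mul_nonneg (by positivity) (tsum_nonneg fun n => ?_)
  have : 0 < Gamma (ν + n + 1) := Gamma_pos_of_pos (by linarith [n.cast_nonneg (α := ℝ)])
  positivity

lemma besselI_two_mul_sqrt_mul (ν : ℝ) {x t : ℝ} (hx : 0 ≤ x) (ht : 0 ≤ t) :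
    besselI ν (2 * √(x * t)) =
      x ^ (ν / 2) * t ^ (ν / 2) * ∑' n : ℕ, (x * t) ^ n / (n.factorial * Gamma (ν + n + 1)) := by
  have hxt : 0 ≤ x * t := mul_nonneg hx ht
  rw [besselI, mul_div_cancel_left₀ _ two_ne_zero, mul_pow, sq_sqrt hxt, sqrt_eq_rpow,
    ← rpow_mul hxt, mul_rpow hx ht, one_div_mul_eq_div]
  congr 2 with n
  ring

lemma integrableOn_rpow_mul_exp_neg_Ioi {a y : ℝ} (ha : 0 < a) (hy : 0 ≤ y) :
    IntegrableOn (fun t : ℝ => t ^ (a - 1) * exp (-t)) (Ioi y) :=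
  ((GammaIntegral_convergent ha).mono_set (Ioi_subset_Ioi hy)).congr_fun
    (fun _ _ => mul_comm _ _) measurableSet_Ioi

lemma uGamma_nonneg (a : ℝ) {y : ℝ} (hy : 0 ≤ y) : 0 ≤ uGamma a y :=
  setIntegral_nonneg measurableSet_Ioi fun t ht => by
    have : 0 ≤ t := hy.trans ht.le
    positivity

lemma uGamma_le_Gamma {a y : ℝ} (ha : 0 < a) (hy : 0 ≤ y) : uGamma a y ≤ Gamma a := by
  rw [Gamma_eq_integral ha, uGamma]
  simp_rw [mul_comm (exp _)]
  refine setIntegral_mono_set ((GammaIntegral_convergent ha).congr_fun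
    (fun _ _ => mul_comm _ _) measurableSet_Ioi) ?_ (Ioi_subset_Ioi hy).eventuallyLE
  filter_upwards [self_mem_ae_restrict measurableSet_Ioi] with t ht
  have : 0 ≤ t := le_of_lt ht
  positivity

lemma uGamma_add_one {a y : ℝ} (ha : 0 < a) (hy : 0 ≤ y) :
    uGamma (a + 1) y = a * uGamma a y + y ^ a * exp (-y) := by
  have hint : IntegrableOn (fun t : ℝ => t ^ (a - 1) * exp (-t)) (Ioi y) :=
    integrableOn_rpow_mul_exp_neg_Ioi ha hy
  have hint' : IntegrableOn (fun t : ℝ => t ^ a * exp (-t)) (Ioi y) := by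
    simpa using integrableOn_rpow_mul_exp_neg_Ioi (a := a + 1) (by linarith) hy
  have hderiv (t : ℝ) (ht : t ∈ Ioi y) : HasDerivAt (fun t => -(t ^ a * exp (-t)))
      (t ^ a * exp (-t) - a * (t ^ (a - 1) * exp (-t))) t := by
    have ht : t ≠ 0 := (hy.trans_lt ht).ne'
    exact (((hasDerivAt_rpow_const (p := a) (Or.inl ht)).mul
      (hasDerivAt_neg t).exp).neg).congr_deriv (by ring)
  have hlim : Tendsto (fun t : ℝ => -(t ^ a * exp (-t))) atTop (𝓝 0) := by
    simpa using (tendsto_rpow_mul_exp_neg_mul_atTop_nhds_zero a 1 one_pos).neg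
  have hcont : ContinuousWithinAt (fun t : ℝ => -(t ^ a * exp (-t))) (Ici y) y :=
    ((continuousAt_rpow_const y a (Or.inr ha.le)).mul
      (continuous_exp.comp continuous_neg).continuousAt).neg.continuousWithinAt
  have key :=
    integral_Ioi_of_hasDerivAt_of_tendsto hcont hderiv (hint'.sub (hint.const_mul a)) hlim
  rw [integral_sub hint' (hint.const_mul a), integral_const_mul] at key
  rw [uGamma, uGamma, add_sub_cancel_right]
  linarith

lemma integral_Ioi_tsum_mul_rpow_mul_exp_neg {c : ℕ → ℝ} {b y : ℝ} (hc : ∀ n, 0 ≤ c n)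
    (hb : 0 < b) (hy : 0 ≤ y) (hs : Summable fun n => c n * uGamma (b + n) y) :
    ∫ t in Ioi y, ∑' n : ℕ, c n * (t ^ (b + n - 1) * exp (-t)) =
      ∑' n : ℕ, c n * uGamma (b + n) y := by
  have hint (n : ℕ) : IntegrableOn (fun t => c n * (t ^ (b + n - 1) * exp (-t))) (Ioi y) :=
    (integrableOn_rpow_mul_exp_neg_Ioi (by positivity) hy).const_mul (c n)
  have hnorm (n : ℕ) : ∫ t in Ioi y, ‖c n * (t ^ (b + n - 1) * exp (-t))‖ =
      c n * uGamma (b + n) y := by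
    rw [uGamma, ← integral_const_mul]
    refine setIntegral_congr_fun measurableSet_Ioi fun t ht => norm_of_nonneg ?_
    have := hc n; have : 0 ≤ t := hy.trans ht.le
    positivity
  rw [← integral_tsum_of_summable_integral_norm hint (by simpa only [hnorm] using hs)]
  simp_rw [integral_const_mul, uGamma]

noncomputable def nuttallWeight (μ x : ℝ) (n : ℕ) : ℝ :=
  exp (-x) * x ^ n / (n.factorial * Gamma (μ + n))

lemma nuttallWeight_nonneg {μ x : ℝ} (hμ : 0 < μ) (hx : 0 ≤ x) (n : ℕ) :
    0 ≤ nuttallWeight μ x n := by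
  have := Gamma_add_nat_pos hμ n
  unfold nuttallWeight
  positivity

lemma nuttallWeight_eq_mul_succ (μ x : ℝ) {n : ℕ} (h : μ + n ≠ 0) :
    nuttallWeight μ x n = (μ + n) * nuttallWeight (μ + 1) x n := by
  rw [nuttallWeight, nuttallWeight, add_right_comm μ 1, Gamma_add_one h]
  field_simp

lemma summable_nuttallWeight_mul_uGamma {b μ x y : ℝ} (hb : 0 < b) (hμ : 0 < μ) (hx : 0 ≤ x)
    (hy : 0 ≤ y) : Summable fun n : ℕ => nuttallWeight μ x n * uGamma (b + n) y := by
  have hs := (summable_pow_mul_Gamma_div_factorial_mul_Gamma hx hb hμ).mul_left (exp (-x))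
  refine hs.of_nonneg_of_le
    (fun n => mul_nonneg (nuttallWeight_nonneg hμ hx n) (uGamma_nonneg _ hy)) fun n => ?_
  calc nuttallWeight μ x n * uGamma (b + n) y ≤ nuttallWeight μ x n * Gamma (b + n) := by
        gcongr
        exacts [nuttallWeight_nonneg hμ hx n, uGamma_le_Gamma (by positivity) hy]
    _ = _ := by rw [nuttallWeight]; ring

lemma nuttallQ_integrand_eq_tsum (η μ : ℝ) {x t : ℝ} (hx : 0 < x) (ht : 0 < t) :
    x ^ ((1 - μ) / 2) * (t ^ (η + (μ - 1) / 2) * exp (-t - x) * besselI (μ - 1) (2 * √(x * t))) =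
      ∑' n : ℕ, nuttallWeight μ x n * (t ^ (η + μ + n - 1) * exp (-t)) := by
  have hx_pow : x ^ ((1 - μ) / 2) * x ^ ((μ - 1) / 2) = 1 := by
    rw [← rpow_add hx]; ring_nf; exact rpow_zero x
  have ht_pow : t ^ (η + (μ - 1) / 2) * t ^ ((μ - 1) / 2) = t ^ (η + μ - 1) := by
    rw [← rpow_add ht]; ring_nf
  rw [besselI_two_mul_sqrt_mul _ hx.le ht.le]
  calc _ = (x ^ ((1 - μ) / 2) * x ^ ((μ - 1) / 2)) * (t ^ (η + (μ - 1) / 2) * t ^ ((μ - 1) / 2)) *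
        exp (-t - x) * ∑' n : ℕ, (x * t) ^ n / (n.factorial * Gamma (μ - 1 + n + 1)) := by ring
    _ = _ := by
      rw [hx_pow, ht_pow, one_mul, ← tsum_mul_left]
      refine tsum_congr fun n => ?_
      have : t ^ (η + μ + n - 1) = t ^ (η + μ - 1) * t ^ n := by
        rw [← rpow_natCast, ← rpow_add ht]; ring_nf
      rw [nuttallWeight, this, show μ - 1 + (n : ℝ) + 1 = μ + n by ring, mul_pow,
        show -t - x = -t + -x by ring, exp_add]
      ring

lemma hasSum_nuttallQ {η μ x y : ℝ} (hημ : 0 < η + μ) (hμ : 0 < μ) (hx : 0 < x) (hy : 0 ≤ y) :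
    HasSum (fun n : ℕ => nuttallWeight μ x n * uGamma (η + μ + n) y) (nuttallQ η μ x y) := by
  have hs := summable_nuttallWeight_mul_uGamma hημ hμ hx.le hy
  convert hs.hasSum using 1
  rw [nuttallQ, ← integral_const_mul,
    ← integral_Ioi_tsum_mul_rpow_mul_exp_neg (nuttallWeight_nonneg hμ hx.le) hημ hy hs]
  exact setIntegral_congr_fun measurableSet_Ioi fun t ht =>
    nuttallQ_integrand_eq_tsum η μ hx (hy.trans_lt ht)

lemma nuttallQ_nonneg (η : ℝ) {μ x y : ℝ} (hμ : 0 < μ) (hx : 0 ≤ x) (hy : 0 ≤ y) :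
    0 ≤ nuttallQ η μ x y := by
  refine mul_nonneg (by positivity) (setIntegral_nonneg measurableSet_Ioi fun t ht => ?_)
  have : 0 ≤ t := hy.trans ht.le
  have := besselI_nonneg (ν := μ - 1) (by linarith) (by positivity : 0 ≤ 2 * √(x * t))
  positivity

lemma hasSum_nuttallWeight_mul_rpow_mul_exp_neg {η μ x y : ℝ} (hημ : 0 < η + μ) (hμ : 0 < μ)
    (hx : 0 < x) (hy : 0 ≤ y) :
    HasSum (fun n : ℕ => nuttallWeight (μ + 1) x n * (y ^ (η + μ + n) * exp (-y)))
      ((y / x) ^ (μ / 2) * y ^ η * exp (-x - y) * besselI μ (2 * √(x * y))) := by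
  have hyημ : y ^ (η + μ) = y ^ η * y ^ (μ / 2) * y ^ (μ / 2) := by
    rw [mul_assoc, ← rpow_add' hy (by positivity), ← rpow_add' hy (by linarith)]; ring_nf
  have hsum : (y / x) ^ (μ / 2) * y ^ η * exp (-x - y) * besselI μ (2 * √(x * y)) =
      exp (-x) * exp (-y) * y ^ (η + μ) *
        ∑' n : ℕ, (x * y) ^ n / (n.factorial * Gamma (μ + 1 + n)) := by
    simp_rw [add_right_comm μ 1]
    rw [besselI_two_mul_sqrt_mul μ hx.le hy, div_rpow hy hx.le, sub_eq_add_neg, exp_add, hyημ]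
    field_simp
  rw [hsum]
  have hs := summable_pow_div_factorial_mul_Gamma (mul_nonneg hx.le hy) (by positivity : 0 < μ + 1)
  refine (hs.hasSum.mul_left (exp (-x) * exp (-y) * y ^ (η + μ))).congr_fun fun n => ?_
  rw [nuttallWeight, rpow_add' hy (by positivity), rpow_natCast, mul_pow]
  ring

lemma nuttallWeight_succ_mul_uGamma {η μ : ℝ} (x : ℝ) {y : ℝ} (hημ : 0 < η + μ) (hμ : 0 < μ)
    (hy : 0 ≤ y) (n : ℕ) :
    nuttallWeight (μ + 1) x n * uGamma (η + (μ + 1) + n) y =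
      nuttallWeight μ x n * uGamma (η + μ + n) y +
        η * (nuttallWeight (μ + 1) x n * uGamma (η - 1 + (μ + 1) + n) y) +
        nuttallWeight (μ + 1) x n * (y ^ (η + μ + n) * exp (-y)) := by
  rw [show η + (μ + 1) + n = η + μ + n + 1 by ring, show η - 1 + (μ + 1) + n = η + μ + n by ring,
    uGamma_add_one (by positivity) hy, nuttallWeight_eq_mul_succ μ x (by positivity)]
  ring

theorem nuttallQ_mono_in_mu (η μ x y : ℝ) (hη : 0 ≤ η) (hμ : 0 < μ) (hx : 0 < x) (hy : 0 ≤ y) :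
    nuttallQ η μ x y ≤ nuttallQ η (μ + 1) x y ∧
      nuttallQ η (μ + 1) x y - nuttallQ η μ x y =
        η * nuttallQ (η - 1) (μ + 1) x y +
          (y / x) ^ (μ / 2) * y ^ η * Real.exp (-x - y) * besselI μ (2 * Real.sqrt (x * y)) ∧
      0 ≤ η * nuttallQ (η - 1) (μ + 1) x y +
          (y / x) ^ (μ / 2) * y ^ η * Real.exp (-x - y) * besselI μ (2 * Real.sqrt (x * y)) := by
  have hημ : 0 < η + μ := by linarith
  have hμ₁ : 0 < μ + 1 := by linarith
  have hsplit := ((hasSum_nuttallQ hημ hμ hx hy).add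
      ((hasSum_nuttallQ (η := η - 1) (by linarith) hμ₁ hx hy).mul_left η)).add
    (hasSum_nuttallWeight_mul_rpow_mul_exp_neg hημ hμ hx hy)
  have hrec := (hasSum_nuttallQ (η := η) (by linarith) hμ₁ hx hy).unique
    (hsplit.congr_fun (nuttallWeight_succ_mul_uGamma x hημ hμ hy))
  have hboundary : 0 ≤ (y / x) ^ (μ / 2) * y ^ η * exp (-x - y) * besselI μ (2 * √(x * y)) := by
    have := besselI_nonneg (ν := μ) (by linarith) (by positivity : 0 ≤ 2 * √(x * y))
    positivity
  have hcorr := add_nonneg (mul_nonneg hη (nuttallQ_nonneg (η - 1) hμ₁ hx.le hy)) hboundary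
  exact ⟨by linarith, by linarith, hcorr⟩
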